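/- For every forest f there is a unique maximal elementary forest of which f is an expansion, called the elementary core core(f): explicitly, core(f) has the same number of roots as f, and its k-th tree is a caret if the k-th tree of f is non-trivial and a leaf otherwise. Then core(f) is elementary, f is an expansion of core(f), and every elementary forest e of which f is an expansion satisfies that core(f) is an expansion of e. Moreover, if f is non-trivial then core(f) is non-trivial. -/
import Mathlib


/-- Finite rooted binary trees. -/
inductive T : Type
  | leaf : T
  | node : T → T → T
  deriving DecidableEq

/-- A caret is the tree with two leaves. -/
def caret : T := T.node T.leaf T.leaf

/-- The number of leaves of a tree. -/
def T.leaves : T → ℕ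
  | .leaf => 1
  | .node l r => l.leaves + r.leaves

/-- The total number of leaves of a forest (list of trees); the leaves are
ordered left to right. -/
def leavesList (f : List T) : ℕ := (f.map T.leaves).sum

/-- Replace the `k`-th (`0`-indexed, left to right) leaf of a tree with a caret. -/
def T.expandAt : T → ℕ → T
  | .leaf, _ => caret
  | .node l r, k =>
      if k < l.leaves then .node (l.expandAt k) r
      else .node l (r.expandAt (k - l.leaves))

/-- The `k`-th simple expansion of a forest: replace its `k`-th (`0`-indexed,
left to right) leaf with a caret. -/
def expandListAt : List T → ℕ → List T
  | [], _ => []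
  | t :: ts, k =>
      if k < t.leaves then t.expandAt k :: ts
      else t :: expandListAt ts (k - t.leaves)

/-- `Expands f' f` means that `f'` is an expansion of `f`, i.e. `f'` is obtained
from `f` by applying finitely many simple expansions. -/
inductive Expands : List T → List T → Prop
  | refl (f : List T) : Expands f f
  | step {g f : List T} (k : ℕ) (hk : k < leavesList g) (h : Expands g f) :
      Expands (expandListAt g k) f

/-- The trivial forest `1_n` with `n` roots. -/
def trivialForest (n : ℕ) : List T := List.replicate n T.leaf

/-- A forest is elementary if each of its trees is either trivial (a leaf)
or a single caret. -/
def Elementary (f : List T) : Prop := ∀ t ∈ f, t = T.leaf ∨ t = caret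

/-- The elementary core of a forest: the elementary forest with the same number of
roots whose `k`-th tree is a caret if the `k`-th tree of `f` is non-trivial, and a
leaf otherwise. -/
def core (f : List T) : List T :=
  f.map (fun t => match t with | T.leaf => T.leaf | T.node _ _ => caret)

-- AUX

lemma T.leaves_pos (t : T) : 0 < t.leaves := by
  induction t with
  | leaf => simp [T.leaves]
  | node l r ihl ihr => simp only [T.leaves]; omega

lemma leavesList_nil : leavesList [] = 0 := rfl

lemma leavesList_cons (t : T) (ts : List T) :
    leavesList (t :: ts) = t.leaves + leavesList ts := by simp [leavesList]

lemma leavesList_append (a b : List T) :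
    leavesList (a ++ b) = leavesList a + leavesList b := by simp [leavesList]

lemma length_expandListAt (f : List T) (k : ℕ) :
    (expandListAt f k).length = f.length := by
  induction f generalizing k with
  | nil => rfl
  | cons t ts ih => simp only [expandListAt]; split <;> simp [ih]

lemma T.leaves_expandAt (t : T) (k : ℕ) : (t.expandAt k).leaves = t.leaves + 1 := by
  induction t generalizing k with
  | leaf => simp [T.expandAt, caret, T.leaves]
  | node l r ihl ihr =>
      simp only [T.expandAt]
      split <;> simp only [T.leaves, ihl, ihr] <;> omega

lemma leavesList_expandListAt (f : List T) (k : ℕ) (hk : k < leavesList f) :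
    leavesList (expandListAt f k) = leavesList f + 1 := by
  induction f generalizing k with
  | nil => simp [leavesList_nil] at hk
  | cons t ts ih =>
      simp only [expandListAt]
      rw [leavesList_cons] at hk
      split
      · simp [leavesList_cons, T.leaves_expandAt]; omega
      · rw [leavesList_cons, leavesList_cons, ih]; · omega
        omega

lemma T.expandAt_ne_leaf (t : T) (k : ℕ) : t.expandAt k ≠ T.leaf := by
  cases t with
  | leaf => simp [T.expandAt, caret]
  | node l r => simp only [T.expandAt]; split <;> simp

lemma getElem?_expandListAt (f : List T) (j k : ℕ) (t' : T)
    (h : (expandListAt f j)[k]? = some t') : t' ≠ T.leaf ∨ f[k]? = some t' := by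
  induction f generalizing j k with
  | nil => simp [expandListAt] at h
  | cons t ts ih =>
      simp only [expandListAt] at h
      split at h
      · cases k with
        | zero => simp only [List.getElem?_cons_zero, Option.some.injEq] at h
                  subst h; exact Or.inl (T.expandAt_ne_leaf _ _)
        | succ k => simp only [List.getElem?_cons_succ] at h ⊢; exact Or.inr h
      · cases k with
        | zero => simp only [List.getElem?_cons_zero, Option.some.injEq] at h
                  subst h; simp
        | succ k => simp only [List.getElem?_cons_succ] at h ⊢; exact ih _ _ h

lemma Expands.length_eq {g f : List T} (h : Expands g f) : g.length = f.length := by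
  induction h with
  | refl => rfl
  | step k hk h ih => rw [length_expandListAt]; exact ih

lemma Expands.ne_leaf {g f : List T} (k : ℕ) (t : T)
    (hf : f[k]? = some t) (ht : t ≠ T.leaf) (h : Expands g f) :
    ∀ t', g[k]? = some t' → t' ≠ T.leaf := by
  induction h with
  | refl => intro t' hg; rw [hf] at hg; injection hg with e; subst e; exact ht
  | step j hj h ih =>
      intro t' hg
      rcases getElem?_expandListAt _ _ _ _ hg with h1 | h1
      · exact h1
      · exact ih hf t' h1

lemma Expands.trans {a b c : List T} (h1 : Expands a b) (h2 : Expands b c) :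
    Expands a c := by
  induction h1 with
  | refl => exact h2
  | step k hk h ih => exact Expands.step k hk (ih h2)

lemma expands_node_aux {g f : List T} (h : Expands g f) :
    ∀ l' l r' r : T, g = [l'] → f = [l] →
      (∀ s, Expands [T.node l' s] [T.node l s]) ∧
      (∀ s, Expands [T.node s l'] [T.node s l]) := by
  induction h with
  | refl f => rintro l' l r' r rfl h; injection h with e; subst e
              exact ⟨fun s => Expands.refl _, fun s => Expands.refl _⟩
  | step k hk h ih =>
      rintro l' l r' r hg rfl
      obtain ⟨l'', rfl⟩ : ∃ x, _ = [x] := List.length_eq_one_iff.mp h.length_eq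
      rw [leavesList_cons, leavesList_nil] at hk
      simp only [expandListAt, if_pos (by omega : k < l''.leaves)] at hg
      injection hg with e _; subst e
      obtain ⟨ihl, ihr⟩ := ih l'' l r' r rfl rfl
      constructor
      · intro s
        have := Expands.step (g := [T.node l'' s]) k
          (by rw [leavesList_cons, leavesList_nil]; simp [T.leaves]; omega) (ihl s)
        simpa only [expandListAt, T.expandAt, leavesList_cons,
          if_pos (show k < (T.node l'' s).leaves by simp [T.leaves]; omega),
          if_pos (by omega : k < l''.leaves)] using this
      · intro s
        have := Expands.step (g := [T.node s l'']) (s.leaves + k)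
          (by rw [leavesList_cons, leavesList_nil]; simp [T.leaves]; omega) (ihr s)
        have hcond : s.leaves + k < (T.node s l'').leaves := by simp [T.leaves]; omega
        simpa only [expandListAt, T.expandAt, if_pos hcond,
          if_neg (by omega : ¬ s.leaves + k < s.leaves),
          Nat.add_sub_cancel_left] using this

lemma expands_node_left {l' l : T} (h : Expands [l'] [l]) (s : T) :
    Expands [T.node l' s] [T.node l s] :=
  (expands_node_aux h l' l l' l rfl rfl).1 s

lemma expands_node_right {l' l : T} (h : Expands [l'] [l]) (s : T) :
    Expands [T.node s l'] [T.node s l] :=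
  (expands_node_aux h l' l l' l rfl rfl).2 s

lemma expands_caret_leaf : Expands [caret] [T.leaf] := by
  have := Expands.step (g := [T.leaf]) 0
    (by simp [leavesList_cons, leavesList_nil, T.leaves]) (Expands.refl [T.leaf])
  simpa [expandListAt, T.expandAt, T.leaves] using this

lemma expands_to_leaf (t : T) : Expands [t] [T.leaf] := by
  induction t with
  | leaf => exact Expands.refl _
  | node l r ihl ihr =>
      exact ((expands_node_left ihl r).trans (expands_node_right ihr T.leaf)).trans
        expands_caret_leaf

lemma expandListAt_append_left (f1 f2 : List T) (k : ℕ) (hk : k < leavesList f1) :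
    expandListAt (f1 ++ f2) k = expandListAt f1 k ++ f2 := by
  induction f1 generalizing k with
  | nil => simp [leavesList_nil] at hk
  | cons t ts ih =>
      rw [leavesList_cons] at hk
      simp only [List.cons_append, expandListAt, List.append_eq]
      split
      · rfl
      · rw [ih]; · rfl
        omega

lemma expandListAt_append_right (f1 f2 : List T) (k : ℕ) :
    expandListAt (f1 ++ f2) (leavesList f1 + k) = f1 ++ expandListAt f2 k := by
  induction f1 generalizing k with
  | nil => simp [leavesList_nil]
  | cons t ts ih =>
      simp only [List.cons_append, expandListAt, leavesList_cons, List.append_eq]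
      rw [if_neg (by omega), show t.leaves + leavesList ts + k - t.leaves
        = leavesList ts + k by omega, ih]

lemma Expands.append_right {g f : List T} (h : Expands g f) (s : List T) :
    Expands (g ++ s) (f ++ s) := by
  induction h with
  | refl => exact Expands.refl _
  | step k hk h ih =>
      have := Expands.step (g := _ ++ s) k (by rw [leavesList_append]; omega) ih
      rwa [expandListAt_append_left _ _ _ hk] at this

lemma Expands.append_left {g f : List T} (h : Expands g f) (p : List T) :
    Expands (p ++ g) (p ++ f) := by
  induction h with
  | refl => exact Expands.refl _
  | step k hk h ih =>
      have := Expands.step (g := p ++ _) (leavesList p + k)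
        (by rw [leavesList_append]; omega) ih
      rwa [expandListAt_append_right] at this

lemma Expands.append {g1 f1 g2 f2 : List T} (h1 : Expands g1 f1) (h2 : Expands g2 f2) :
    Expands (g1 ++ g2) (f1 ++ f2) :=
  (h1.append_right g2).trans (h2.append_left f1)

lemma expands_of_forall2 {g f : List T}
    (h : List.Forall₂ (fun a b => Expands [a] [b]) g f) : Expands g f := by
  induction h with
  | nil => exact Expands.refl _
  | cons h1 h2 ih => exact Expands.append (g1 := [_]) (f1 := [_]) h1 ih

lemma Expands.eq_or_lt {g f : List T} (h : Expands g f) :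
    g = f ∨ leavesList f < leavesList g := by
  induction h with
  | refl => exact Or.inl rfl
  | step k hk h ih =>
      right
      rw [leavesList_expandListAt _ _ hk]
      rcases ih with rfl | h' <;> omega

lemma Expands.antisymm {a b : List T} (h1 : Expands a b) (h2 : Expands b a) : a = b := by
  rcases h1.eq_or_lt with rfl | h1'
  · rfl
  · rcases h2.eq_or_lt with rfl | h2' <;> omega

lemma expands_tree_core (t : T) :
    Expands [t] [(match t with | T.leaf => T.leaf | T.node _ _ => caret)] := by
  cases t with
  | leaf => exact Expands.refl _
  | node l r =>
      exact (expands_node_left (expands_to_leaf l) r).trans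
        (expands_node_right (expands_to_leaf r) T.leaf)

lemma elementary_core (f : List T) : Elementary (core f) := by
  intro t ht
  simp only [core, List.mem_map] at ht
  obtain ⟨a, -, rfl⟩ := ht
  cases a <;> simp

lemma expands_core (f : List T) : Expands f (core f) := by
  apply expands_of_forall2
  rw [core, List.forall₂_map_right_iff, List.forall₂_same]
  intro a _
  exact expands_tree_core a

lemma core_max {f e : List T} (he : Elementary e) (h : Expands f e) :
    Expands (core f) e := by
  apply expands_of_forall2
  have hlen : (core f).length = e.length := by
    rw [core, List.length_map, h.length_eq]
  rw [List.forall₂_iff_get]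
  refine ⟨hlen, ?_⟩
  intro i h1 h2
  have hif : i < f.length := by rwa [core, List.length_map] at h1
  have hcore : (core f).get ⟨i, h1⟩
      = (match f[i]'hif with | T.leaf => T.leaf | T.node _ _ => caret) := by
    simp [core, List.getElem_map]
  rcases he (e.get ⟨i, h2⟩) (by simp [List.get_mem]) with hl | hc
  · rw [hl, hcore]
    cases hfi : f[i]'hif with
    | leaf => exact Expands.refl _
    | node a b => exact expands_caret_leaf
  · have hfne : f[i]'hif ≠ T.leaf := by
      refine Expands.ne_leaf i (e.get ⟨i, h2⟩) ?_ ?_ h _ ?_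
      · exact List.getElem?_eq_getElem h2
      · rw [hc]; simp [caret]
      · exact List.getElem?_eq_getElem hif
    rw [hc, hcore]
    cases hfi : f[i]'hif with
    | leaf => exact absurd hfi hfne
    | node a b => exact Expands.refl _


/-- `core f` is the unique maximal elementary forest of which `f` is an expansion:
it is elementary, has the same number of roots as `f` with `k`-th tree a caret iff
the `k`-th tree of `f` is non-trivial, `f` is an expansion of it, and it is an
expansion of every elementary forest of which `f` is an expansion.  Moreover if
`f` is non-trivial then so is `core f`. -/
theorem core_spec (f : List T) (hf : f ≠ []) :
    Elementary (core f) ∧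
    (core f).length = f.length ∧
    (∀ (k : ℕ) (hk : k < f.length),
      (core f)[k]? = some (match f[k]'hk with | T.leaf => T.leaf | T.node _ _ => caret)) ∧
    Expands f (core f) ∧
    (∀ e : List T, Elementary e → Expands f e → Expands (core f) e) ∧
    (∃! e : List T, Elementary e ∧ Expands f e ∧
      ∀ e' : List T, Elementary e' → Expands f e' → Expands e e') ∧
    ((∃ t ∈ f, t ≠ T.leaf) → ∃ t ∈ core f, t ≠ T.leaf) := by
  refine ⟨elementary_core f, by simp [core], ?_, expands_core f, ?_, ?_, ?_⟩
  · intro k hk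
    have hk' : k < (core f).length := by simpa [core] using hk
    rw [List.getElem?_eq_getElem hk']
    simp [core, List.getElem_map]
  · intro e he hfe; exact core_max he hfe
  · refine ⟨core f, ⟨elementary_core f, expands_core f,
      fun e' he' hfe' => core_max he' hfe'⟩, ?_⟩
    rintro e ⟨he, hfe, hmax⟩
    exact Expands.antisymm (hmax _ (elementary_core f) (expands_core f)) (core_max he hfe)
  · rintro ⟨t, ht, hne⟩
    cases t with
    | leaf => exact absurd rfl hne
    | node a b =>
        exact ⟨caret, List.mem_map.mpr ⟨T.node a b, ht, rfl⟩, by simp [caret]⟩
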